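/- Let 𝔤 be the 4-dimensional real Lie algebra A_{3,6} ⊕ A_1, i.e., the Lie algebra with basis e₁, e₂, e₃, e₄ whose only nonzero brackets among basis vectors (up to antisymmetry) are [e₁,e₃] = −e₂ and [e₂,e₃] = e₁. Then for every inner product ⟨·,·⟩ on 𝔤, the scalar curvature S = trace(Ric) of the metric Lie algebra (𝔤, ⟨·,·⟩) satisfies S ≤ 0. -/

import Mathlib

open Matrix Polynomial

noncomputable section

variable {L : Type*} [LieRing L] [LieAlgebra ℝ L]

/-- `Q` is an inner product on the real Lie algebra `L`: a symmetric positive definite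
bilinear form. -/
def IsInnerProduct (Q : L →ₗ[ℝ] L →ₗ[ℝ] ℝ) : Prop :=
  (∀ x y, Q x y = Q y x) ∧ ∀ x, x ≠ 0 → 0 < Q x x

/-- `g` is a `Q`-orthonormal basis of `L`. -/
def IsOrthonormalBasis {ι : Type*} [DecidableEq ι] (Q : L →ₗ[ℝ] L →ₗ[ℝ] ℝ)
    (g : Module.Basis ι ℝ L) : Prop :=
  ∀ i j, Q (g i) (g j) = if i = j then 1 else 0

/-- The matrix of `ad (g i)` with respect to the basis `g`. -/
def adMatrix {ι : Type*} [Fintype ι] [DecidableEq ι] (g : Module.Basis ι ℝ L) (i : ι) :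
    Matrix ι ι ℝ :=
  LinearMap.toMatrix g g (LieAlgebra.ad ℝ L (g i))

/-- The matrix, in a `Q`-orthonormal basis `g`, of the Ricci operator
`Ric = -(1/2) ∑ᵢ ad_{gᵢ}* ∘ ad_{gᵢ} + (1/4) ∑ᵢ ad_{gᵢ} ∘ ad_{gᵢ}* - (1/2) B - (ad_H)ˢ`
of the metric Lie algebra `(L, Q)`:  in an orthonormal basis the adjoint `A*` corresponds
to the transposed matrix, the Killing operator `B` has matrix
`(j,k) ↦ trace(ad(gⱼ) ∘ ad(g_k))`, and `H = ∑ᵢ trace(ad gᵢ) • gᵢ`, so that the matrix of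
`ad_H` is `∑ᵢ trace(ad gᵢ) • (matrix of ad gᵢ)` and `(ad_H)ˢ = (1/2)(ad_H + ad_H*)`. -/
def ricciMatrix {ι : Type*} [Fintype ι] [DecidableEq ι] (g : Module.Basis ι ℝ L) : Matrix ι ι ℝ :=
  (-(1/2 : ℝ)) • ∑ i, (adMatrix g i)ᵀ * adMatrix g i
    + (1/4 : ℝ) • ∑ i, adMatrix g i * (adMatrix g i)ᵀ
    - (1/2 : ℝ) • Matrix.of (fun j k => (adMatrix g j * adMatrix g k).trace)
    - (1/2 : ℝ) • ((∑ i, (adMatrix g i).trace • adMatrix g i)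
        + (∑ i, (adMatrix g i).trace • adMatrix g i)ᵀ)

/-- `μ` lists the eigenvalues (with multiplicity, in nondecreasing order) of the
4×4 matrix `A`: `μ` is monotone and the characteristic polynomial of `A` is
`∏ᵢ (X - μ i)`. -/
def SortedEigenvalues (A : Matrix (Fin 4) (Fin 4) ℝ) (μ : Fin 4 → ℝ) : Prop :=
  Monotone μ ∧ A.charpoly = ∏ i, (X - C (μ i))

end

namespace ScalarCurvatureAux

lemma bessel3 (x p q r : Fin 4 → ℝ) (hp : p ⬝ᵥ p = 1) (hq : q ⬝ᵥ q = 1) (hr : r ⬝ᵥ r = 1)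
    (hpq : p ⬝ᵥ q = 0) (hpr : p ⬝ᵥ r = 0) (hqr : q ⬝ᵥ r = 0) :
    (x ⬝ᵥ p)^2 + (x ⬝ᵥ q)^2 + (x ⬝ᵥ r)^2 ≤ x ⬝ᵥ x := by
  have key : x ⬝ᵥ x - (x ⬝ᵥ p)^2 - (x ⬝ᵥ q)^2 - (x ⬝ᵥ r)^2 =
      ∑ i : Fin 4, (x i - (x ⬝ᵥ p) * p i - (x ⬝ᵥ q) * q i - (x ⬝ᵥ r) * r i)^2 := by
    simp only [dotProduct, Fin.sum_univ_four] at *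
    linear_combination (-((x 0*p 0 + x 1*p 1 + x 2*p 2 + x 3*p 3)^2)) * hp
      + (-((x 0*q 0 + x 1*q 1 + x 2*q 2 + x 3*q 3)^2)) * hq
      + (-((x 0*r 0 + x 1*r 1 + x 2*r 2 + x 3*r 3)^2)) * hr
      + (-(2*(x 0*p 0 + x 1*p 1 + x 2*p 2 + x 3*p 3)*(x 0*q 0 + x 1*q 1 + x 2*q 2 + x 3*q 3))) * hpq
      + (-(2*(x 0*p 0 + x 1*p 1 + x 2*p 2 + x 3*p 3)*(x 0*r 0 + x 1*r 1 + x 2*r 2 + x 3*r 3))) * hpr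
      + (-(2*(x 0*q 0 + x 1*q 1 + x 2*q 2 + x 3*q 3)*(x 0*r 0 + x 1*r 1 + x 2*r 2 + x 3*r 3))) * hqr
  have h0 : (0:ℝ) ≤ ∑ i : Fin 4, (x i - (x ⬝ᵥ p) * p i - (x ⬝ᵥ q) * q i - (x ⬝ᵥ r) * r i)^2 :=
    Finset.sum_nonneg fun i _ => sq_nonneg _
  linarith

lemma bessel3' (x p q r : Fin 4 → ℝ) (hp : 0 < p ⬝ᵥ p) (hq : 0 < q ⬝ᵥ q) (hr : 0 < r ⬝ᵥ r)
    (hpq : p ⬝ᵥ q = 0) (hpr : p ⬝ᵥ r = 0) (hqr : q ⬝ᵥ r = 0) :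
    (x ⬝ᵥ p)^2/(p ⬝ᵥ p) + (x ⬝ᵥ q)^2/(q ⬝ᵥ q) + (x ⬝ᵥ r)^2/(r ⬝ᵥ r) ≤ x ⬝ᵥ x := by
  set p' : Fin 4 → ℝ := (Real.sqrt (p ⬝ᵥ p))⁻¹ • p with hp'
  set q' : Fin 4 → ℝ := (Real.sqrt (q ⬝ᵥ q))⁻¹ • q with hq'
  set r' : Fin 4 → ℝ := (Real.sqrt (r ⬝ᵥ r))⁻¹ • r with hr'
  have hsp : Real.sqrt (p ⬝ᵥ p) ≠ 0 := ne_of_gt (Real.sqrt_pos.mpr hp)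
  have hsq : Real.sqrt (q ⬝ᵥ q) ≠ 0 := ne_of_gt (Real.sqrt_pos.mpr hq)
  have hsr : Real.sqrt (r ⬝ᵥ r) ≠ 0 := ne_of_gt (Real.sqrt_pos.mpr hr)
  have sqp : Real.sqrt (p ⬝ᵥ p) * Real.sqrt (p ⬝ᵥ p) = p ⬝ᵥ p := Real.mul_self_sqrt hp.le
  have sqq : Real.sqrt (q ⬝ᵥ q) * Real.sqrt (q ⬝ᵥ q) = q ⬝ᵥ q := Real.mul_self_sqrt hq.le
  have sqr : Real.sqrt (r ⬝ᵥ r) * Real.sqrt (r ⬝ᵥ r) = r ⬝ᵥ r := Real.mul_self_sqrt hr.le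
  have key := bessel3 x p' q' r' ?_ ?_ ?_ ?_ ?_ ?_
  · have e1 : (x ⬝ᵥ p') = (Real.sqrt (p ⬝ᵥ p))⁻¹ * (x ⬝ᵥ p) := by
      simp [hp', dotProduct_smul, smul_eq_mul]
    have e2 : (x ⬝ᵥ q') = (Real.sqrt (q ⬝ᵥ q))⁻¹ * (x ⬝ᵥ q) := by
      simp [hq', dotProduct_smul, smul_eq_mul]
    have e3 : (x ⬝ᵥ r') = (Real.sqrt (r ⬝ᵥ r))⁻¹ * (x ⬝ᵥ r) := by
      simp [hr', dotProduct_smul, smul_eq_mul]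
    rw [e1, e2, e3] at key
    have d1 : ((Real.sqrt (p ⬝ᵥ p))⁻¹ * (x ⬝ᵥ p))^2 = (x ⬝ᵥ p)^2/(p ⬝ᵥ p) := by
      rw [← sqp]; field_simp; rw [Real.sqrt_sq (Real.sqrt_nonneg _)]
    have d2 : ((Real.sqrt (q ⬝ᵥ q))⁻¹ * (x ⬝ᵥ q))^2 = (x ⬝ᵥ q)^2/(q ⬝ᵥ q) := by
      rw [← sqq]; field_simp; rw [Real.sqrt_sq (Real.sqrt_nonneg _)]
    have d3 : ((Real.sqrt (r ⬝ᵥ r))⁻¹ * (x ⬝ᵥ r))^2 = (x ⬝ᵥ r)^2/(r ⬝ᵥ r) := by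
      rw [← sqr]; field_simp; rw [Real.sqrt_sq (Real.sqrt_nonneg _)]
    rw [d1, d2, d3] at key; exact key
  · simp only [hp', smul_dotProduct, dotProduct_smul, smul_eq_mul]
    rw [← mul_assoc, ← mul_inv, sqp]; field_simp
  · simp only [hq', smul_dotProduct, dotProduct_smul, smul_eq_mul]
    rw [← mul_assoc, ← mul_inv, sqq]; field_simp
  · simp only [hr', smul_dotProduct, dotProduct_smul, smul_eq_mul]
    rw [← mul_assoc, ← mul_inv, sqr]; field_simp
  · simp [hp', hq', smul_dotProduct, dotProduct_smul, hpq]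
  · simp [hp', hr', smul_dotProduct, dotProduct_smul, hpr]
  · simp [hq', hr', smul_dotProduct, dotProduct_smul, hqr]

lemma bessel_frob (M : Matrix (Fin 4) (Fin 4) ℝ) (p q r : Fin 4 → ℝ)
    (hp : 0 < p ⬝ᵥ p) (hq : 0 < q ⬝ᵥ q) (hr : 0 < r ⬝ᵥ r)
    (hpq : p ⬝ᵥ q = 0) (hpr : p ⬝ᵥ r = 0) (hqr : q ⬝ᵥ r = 0) :
    ((M *ᵥ p) ⬝ᵥ (M *ᵥ p))/(p ⬝ᵥ p) + ((M *ᵥ q) ⬝ᵥ (M *ᵥ q))/(q ⬝ᵥ q)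
      + ((M *ᵥ r) ⬝ᵥ (M *ᵥ r))/(r ⬝ᵥ r) ≤ (Mᵀ * M).trace := by
  have hrow : ∀ i, (M i ⬝ᵥ p)^2/(p ⬝ᵥ p) + (M i ⬝ᵥ q)^2/(q ⬝ᵥ q) + (M i ⬝ᵥ r)^2/(r ⬝ᵥ r)
      ≤ M i ⬝ᵥ M i := fun i => bessel3' (M i) p q r hp hq hr hpq hpr hqr
  have hsum := Finset.sum_le_sum (fun i (_ : i ∈ Finset.univ) => hrow i)
  have htr : (Mᵀ * M).trace = ∑ i : Fin 4, M i ⬝ᵥ M i := by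
    simp only [Matrix.trace, Matrix.diag, Matrix.mul_apply, Matrix.transpose_apply, dotProduct]
    exact Finset.sum_comm
  have hL : ∑ i : Fin 4, ((M i ⬝ᵥ p)^2/(p ⬝ᵥ p) + (M i ⬝ᵥ q)^2/(q ⬝ᵥ q) + (M i ⬝ᵥ r)^2/(r ⬝ᵥ r))
      = ((M *ᵥ p) ⬝ᵥ (M *ᵥ p))/(p ⬝ᵥ p) + ((M *ᵥ q) ⬝ᵥ (M *ᵥ q))/(q ⬝ᵥ q)
      + ((M *ᵥ r) ⬝ᵥ (M *ᵥ r))/(r ⬝ᵥ r) := by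
    have e1 : (M *ᵥ p) ⬝ᵥ (M *ᵥ p) = ∑ i : Fin 4, (M i ⬝ᵥ p)^2 := by
      simp [dotProduct, Matrix.mulVec, sq]
    have e2 : (M *ᵥ q) ⬝ᵥ (M *ᵥ q) = ∑ i : Fin 4, (M i ⬝ᵥ q)^2 := by
      simp [dotProduct, Matrix.mulVec, sq]
    have e3 : (M *ᵥ r) ⬝ᵥ (M *ᵥ r) = ∑ i : Fin 4, (M i ⬝ᵥ r)^2 := by
      simp [dotProduct, Matrix.mulVec, sq]
    rw [e1, e2, e3, Finset.sum_add_distrib, Finset.sum_add_distrib,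
      ← Finset.sum_div, ← Finset.sum_div, ← Finset.sum_div]
  rw [htr, ← hL]; exact hsum

lemma dot_self_nonneg (w : Fin 4 → ℝ) : 0 ≤ w ⬝ᵥ w := by
  simp only [dotProduct, ← sq]; positivity

lemma core_aux (a b c d τ W F2 : ℝ) (ha : 0 < a) (hd : 0 < d) (hτ : 0 < τ)
    (hdd : d = a*b - c^2)
    (hB : b/a + (a^3+2*a*c^2+c^2*b)/(a*d) + W/τ ≤ F2) : W + 2*τ ≤ τ*F2 := by
  have h2 : 2 ≤ b/a + (a^3+2*a*c^2+c^2*b)/(a*d) := by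
    rw [div_add_div _ _ (ne_of_gt ha) (ne_of_gt (mul_pos ha hd)), le_div_iff₀ (by positivity)]
    nlinarith [mul_nonneg (mul_nonneg ha.le ha.le) (add_nonneg (sq_nonneg (a-b)) (by positivity : (0:ℝ) ≤ 4*c^2))]
  have h3 : W/τ ≤ F2 - 2 := by linarith
  have h4 : W ≤ (F2 - 2)*τ := (div_le_iff₀ hτ).mp h3
  nlinarith [h4]

lemma core (M : Matrix (Fin 4) (Fin 4) ℝ) (t : Fin 4 → ℝ)
    (hM3 : M * M * M = -M) (htr2 : (M * M).trace = -2) (htM : t ᵥ* M = 0) :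
    (M *ᵥ t) ⬝ᵥ (M *ᵥ t) + 2 * (t ⬝ᵥ t) ≤ (t ⬝ᵥ t) * (Mᵀ * M).trace := by
  rcases eq_or_ne t 0 with ht | ht
  · simp [ht]
  have hτ : 0 < t ⬝ᵥ t := lt_of_le_of_ne (dot_self_nonneg t) (fun h => ht (dotProduct_self_eq_zero.mp h.symm))
  -- find a nonzero column
  have hMne : ∃ i j, M i j ≠ 0 := by
    by_contra h
    push_neg at h
    rw [show M * M = 0 by ext i j; simp [Matrix.mul_apply, h]] at htr2
    simp at htr2
  obtain ⟨i0, j0, hM0⟩ := hMne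
  set u : Fin 4 → ℝ := M *ᵥ Pi.single j0 1 with hu
  have hucol : ∀ k, u k = M k j0 := by
    intro k; simp [hu, Matrix.mulVec_single]
  have hune : u ≠ 0 := fun h => hM0 (by rw [← hucol i0, h]; rfl)
  have ha : 0 < u ⬝ᵥ u := lt_of_le_of_ne (dot_self_nonneg u) (fun h => hune (dotProduct_self_eq_zero.mp h.symm))
  set v : Fin 4 → ℝ := M *ᵥ u with hv
  have hMv : M *ᵥ v = -u := by
    rw [hv, hu, mulVec_mulVec, mulVec_mulVec, hM3]
    simp [Matrix.neg_mulVec]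
    rfl
  -- orthogonality of t with image of M
  have hortho : ∀ x : Fin 4 → ℝ, t ⬝ᵥ (M *ᵥ x) = 0 := by
    intro x; rw [dotProduct_mulVec, htM, zero_dotProduct]
  have htu : t ⬝ᵥ u = 0 := hortho _
  have htv : t ⬝ᵥ v = 0 := hortho _
  set a : ℝ := u ⬝ᵥ u with hadef
  set b : ℝ := v ⬝ᵥ v with hbdef
  set c : ℝ := u ⬝ᵥ v with hcdef
  set u2 : Fin 4 → ℝ := a • v - c • u with hu2def
  have hu2u : u2 ⬝ᵥ u = 0 := by
    simp [hu2def, sub_dotProduct, smul_dotProduct, smul_eq_mul, dotProduct_comm v u, ← hcdef, ← hadef]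
    ring
  have hu2t : u2 ⬝ᵥ t = 0 := by
    simp [hu2def, sub_dotProduct, smul_dotProduct, smul_eq_mul, dotProduct_comm v t,
      dotProduct_comm u t, htu, htv]
  have hu2n : u2 ⬝ᵥ u2 = a * (a*b - c^2) := by
    simp only [hu2def, sub_dotProduct, dotProduct_sub, smul_dotProduct, dotProduct_smul,
      smul_eq_mul, dotProduct_comm v u, ← hadef, ← hbdef, ← hcdef]
    ring
  set d : ℝ := a*b - c^2 with hddef
  have hd0 : 0 ≤ d := nonneg_of_mul_nonneg_right (hu2n ▸ dot_self_nonneg u2) ha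
  have hd : 0 < d := by
    rcases hd0.lt_or_eq with h | h
    · exact h
    · exfalso
      have hu2z : u2 = 0 := dotProduct_self_eq_zero.mp (by rw [hu2n, ← h, mul_zero])
      have hav : a • v = c • u := sub_eq_zero.mp (hu2def ▸ hu2z)
      have h2 : a • (M *ᵥ v) = c • (M *ᵥ u) := by
        have := congrArg (fun w => M *ᵥ w) hav
        simpa [mulVec_smul] using this
      rw [hMv, ← hv] at h2
      have h3 : (a • (-u)) ⬝ᵥ u = (c • v) ⬝ᵥ u := by rw [h2]
      rw [smul_dotProduct, smul_dotProduct, neg_dotProduct, dotProduct_comm v u] at h3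
      simp only [smul_eq_mul] at h3
      rw [← hadef, ← hcdef] at h3
      nlinarith [ha, sq_nonneg c, h3]
  have hu2pos : 0 < u2 ⬝ᵥ u2 := by rw [hu2n]; exact mul_pos ha hd
  have huu2 : u ⬝ᵥ u2 = 0 := by rw [dotProduct_comm]; exact hu2u
  have hut : u ⬝ᵥ t = 0 := by rw [dotProduct_comm]; exact htu
  have hB := bessel_frob M u u2 t (hadef ▸ ha) hu2pos hτ huu2 hut hu2t
  have hMu : M *ᵥ u = v := hv.symm
  have hMu2 : M *ᵥ u2 = a • (-u) - c • v := by
    rw [hu2def, mulVec_sub, mulVec_smul, mulVec_smul, hMv, hMu]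
  have en1 : (M *ᵥ u) ⬝ᵥ (M *ᵥ u) = b := by rw [hMu, ← hbdef]
  have en2 : (M *ᵥ u2) ⬝ᵥ (M *ᵥ u2) = a^3 + 2*a*c^2 + c^2*b := by
    rw [hMu2]
    simp only [sub_dotProduct, dotProduct_sub, smul_dotProduct, dotProduct_smul,
      neg_dotProduct, dotProduct_neg, smul_eq_mul, dotProduct_comm v u,
      ← hadef, ← hbdef, ← hcdef]
    ring
  rw [en1, en2, hu2n, ← hadef] at hB
  exact core_aux a b c d (t ⬝ᵥ t) ((M *ᵥ t) ⬝ᵥ (M *ᵥ t)) ((Mᵀ * M).trace) ha hd hτ hddef hB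

lemma trace_ricci_eq (A : Fin 4 → Matrix (Fin 4) (Fin 4) ℝ)
    (M : Matrix (Fin 4) (Fin 4) ℝ) (t : Fin 4 → ℝ)
    (hA : ∀ i, A i = vecMulVec (fun k => M k i) t - t i • M)
    (htM : t ᵥ* M = 0) (htr1 : M.trace = 0) (htr2 : (M * M).trace = -2) :
    ((-(1/2 : ℝ)) • ∑ i, (A i)ᵀ * A i + (1/4 : ℝ) • ∑ i, A i * (A i)ᵀ
      - (1/2 : ℝ) • Matrix.of (fun j k => (A j * A k).trace)
      - (1/2 : ℝ) • ((∑ i, (A i).trace • A i) + (∑ i, (A i).trace • A i)ᵀ)).trace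
    = -(1/2) * ((t ⬝ᵥ t) * (Mᵀ * M).trace - (M *ᵥ t) ⬝ᵥ (M *ᵥ t) - 2 * (t ⬝ᵥ t)) := by
  have hr : ∀ i, t 0 * M 0 i + t 1 * M 1 i + t 2 * M 2 i + t 3 * M 3 i = 0 := by
    intro i
    have h := congrFun htM i
    simpa [Matrix.vecMul, dotProduct, Fin.sum_univ_four] using h
  simp only [Matrix.trace, Matrix.diag, Matrix.mul_apply, Fin.sum_univ_four] at htr1 htr2
  simp only [hA]
  simp only [Matrix.trace, Matrix.diag, Matrix.mul_apply, Matrix.add_apply, Matrix.sub_apply,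
    Matrix.smul_apply, Matrix.neg_apply, Matrix.transpose_apply, Matrix.vecMulVec_apply,
    Matrix.of_apply, smul_eq_mul, Fin.sum_univ_four, dotProduct, Matrix.mulVec]
  linear_combination (-(3/2) * (t 0 * M 0 0 + t 1 * M 1 0 + t 2 * M 2 0 + t 3 * M 3 0) + (M 0 0 * t 0 + M 0 1 * t 1 + M 0 2 * t 2 + M 0 3 * t 3) + t 0 * (M 0 0 + M 1 1 + M 2 2 + M 3 3)) * hr 0
      + (-(3/2) * (t 0 * M 0 1 + t 1 * M 1 1 + t 2 * M 2 1 + t 3 * M 3 1) + (M 1 0 * t 0 + M 1 1 * t 1 + M 1 2 * t 2 + M 1 3 * t 3) + t 1 * (M 0 0 + M 1 1 + M 2 2 + M 3 3)) * hr 1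
      + (-(3/2) * (t 0 * M 0 2 + t 1 * M 1 2 + t 2 * M 2 2 + t 3 * M 3 2) + (M 2 0 * t 0 + M 2 1 * t 1 + M 2 2 * t 2 + M 2 3 * t 3) + t 2 * (M 0 0 + M 1 1 + M 2 2 + M 3 3)) * hr 2
      + (-(3/2) * (t 0 * M 0 3 + t 1 * M 1 3 + t 2 * M 2 3 + t 3 * M 3 3) + (M 3 0 * t 0 + M 3 1 * t 1 + M 3 2 * t 2 + M 3 3 * t 3) + t 3 * (M 0 0 + M 1 1 + M 2 2 + M 3 3)) * hr 3
      + (t 0 * (t 0 * M 0 0 + t 1 * M 1 0 + t 2 * M 2 0 + t 3 * M 3 0) + t 1 * (t 0 * M 0 1 + t 1 * M 1 1 + t 2 * M 2 1 + t 3 * M 3 1) + t 2 * (t 0 * M 0 2 + t 1 * M 1 2 + t 2 * M 2 2 + t 3 * M 3 2) + t 3 * (t 0 * M 0 3 + t 1 * M 1 3 + t 2 * M 2 3 + t 3 * M 3 3) - (t 0 * t 0 + t 1 * t 1 + t 2 * t 2 + t 3 * t 3) * (M 0 0 + M 1 1 + M 2 2 + M 3 3)) * htr1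
      + (-(1/2) * (t 0 * t 0 + t 1 * t 1 + t 2 * t 2 + t 3 * t 3)) * htr2

end ScalarCurvatureAux

/-- For every inner product on the Lie algebra `A_{3,6} ⊕ A_1`
(nonzero brackets `[e₁,e₃] = -e₂`, `[e₂,e₃] = e₁`), the scalar curvature
`S = trace Ric` satisfies `S ≤ 0`. -/
theorem scalar_curvature_nonpos_A36_plus_A1
    (L : Type*) [LieRing L] [LieAlgebra ℝ L] (e : Module.Basis (Fin 4) ℝ L)
    (h12 : ⁅e 0, e 1⁆ = 0) (h13 : ⁅e 0, e 2⁆ = -e 1) (h14 : ⁅e 0, e 3⁆ = 0)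
    (h23 : ⁅e 1, e 2⁆ = e 0) (h24 : ⁅e 1, e 3⁆ = 0) (h34 : ⁅e 2, e 3⁆ = 0)
    (Q : L →ₗ[ℝ] L →ₗ[ℝ] ℝ) (hQ : IsInnerProduct Q)
    (g : Module.Basis (Fin 4) ℝ L) (hg : IsOrthonormalBasis Q g) :
    (ricciMatrix g).trace ≤ 0 := by
  set ξ : L →ₗ[ℝ] ℝ := e.coord 2 with hξdef
  set T : L →ₗ[ℝ] L := e.constr ℝ ![-(e 1), e 0, 0, 0] with hTdef
  have hT0 : T (e 0) = -(e 1) := by rw [hTdef, Module.Basis.constr_basis]; rfl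
  have hT1 : T (e 1) = e 0 := by rw [hTdef, Module.Basis.constr_basis]; rfl
  have hT2 : T (e 2) = 0 := by rw [hTdef, Module.Basis.constr_basis]; rfl
  have hT3 : T (e 3) = 0 := by rw [hTdef, Module.Basis.constr_basis]; rfl
  have hξ : ∀ i, ξ (e i) = if i = 2 then 1 else 0 := by
    intro i; rw [hξdef, Module.Basis.coord_apply, Module.Basis.repr_self, Finsupp.single_apply]
  have h21 : ⁅e 1, e 0⁆ = 0 := by rw [← lie_skew, h12]; simp
  have h31 : ⁅e 2, e 0⁆ = e 1 := by rw [← lie_skew, h13]; simp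
  have h41 : ⁅e 3, e 0⁆ = 0 := by rw [← lie_skew, h14]; simp
  have h32 : ⁅e 2, e 1⁆ = -e 0 := by rw [← lie_skew, h23]
  have h42 : ⁅e 3, e 1⁆ = 0 := by rw [← lie_skew, h24]; simp
  have h43 : ⁅e 3, e 2⁆ = 0 := by rw [← lie_skew, h34]; simp
  have step1 : ∀ j, (-(LieAlgebra.ad ℝ L (e j)) : L →ₗ[ℝ] L)
      = ξ (e j) • T - ξ.smulRight (T (e j)) := by
    intro j
    apply Module.Basis.ext e
    intro i
    fin_cases i <;> fin_cases j <;>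
      simp [LieAlgebra.ad_apply, hT0, hT1, hT2, hT3, hξ,
        h12, h13, h14, h23, h24, h34, h21, h31, h41, h32, h42, h43]
  have step2 : ∀ x : L, (LieAlgebra.ad ℝ L x : L →ₗ[ℝ] L) = ξ.smulRight (T x) - ξ x • T := by
    intro x
    apply Module.Basis.ext e
    intro j
    have h := LinearMap.congr_fun (step1 j) x
    simp only [LinearMap.neg_apply, LieAlgebra.ad_apply, LinearMap.sub_apply,
      LinearMap.smul_apply, LinearMap.smulRight_apply] at h ⊢
    rw [← lie_skew x (e j)]; exact h
  have hbr : ∀ x y : L, ⁅x, y⁆ = ξ y • T x - ξ x • T y := by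
    intro x y
    have := LinearMap.congr_fun (step2 x) y
    simpa using this
  -- matrix of T in basis g and the vector t
  set Mg : Matrix (Fin 4) (Fin 4) ℝ := LinearMap.toMatrix g g T with hMgdef
  set tv : Fin 4 → ℝ := fun i => ξ (g i) with htvdef
  -- ξ ∘ T = 0
  have hxiT : ∀ x : L, ξ (T x) = 0 := by
    have : ξ ∘ₗ T = 0 := by
      apply Module.Basis.ext e
      intro i
      fin_cases i <;> simp [hT0, hT1, hT2, hT3, hξ]
    intro x
    exact LinearMap.congr_fun this x
  -- T ∘ T ∘ T = -T
  have hTTT : T ∘ₗ (T ∘ₗ T) = -T := by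
    apply Module.Basis.ext e
    intro i
    fin_cases i <;> simp [hT0, hT1, hT2, hT3]
  have hM3 : Mg * (Mg * Mg) = -Mg := by
    rw [hMgdef, ← LinearMap.toMatrix_comp g g g, ← LinearMap.toMatrix_comp g g g, hTTT, map_neg]
  -- traces of T and T²
  have htr1 : Mg.trace = 0 := by
    have h1 : Mg.trace = LinearMap.trace ℝ L T := (LinearMap.trace_eq_matrix_trace ℝ g T).symm
    have h2 : LinearMap.trace ℝ L T = (LinearMap.toMatrix e e T).trace :=
      LinearMap.trace_eq_matrix_trace ℝ e T
    rw [h1, h2]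
    simp [Matrix.trace, Matrix.diag, Fin.sum_univ_four, LinearMap.toMatrix_apply,
      hT0, hT1, hT2, hT3, Module.Basis.repr_self]
  have htr2 : (Mg * Mg).trace = -2 := by
    have h0 : Mg * Mg = LinearMap.toMatrix g g (T ∘ₗ T) := by
      rw [LinearMap.toMatrix_comp g g g, hMgdef]
    have h1 : (Mg * Mg).trace = LinearMap.trace ℝ L (T ∘ₗ T) := by
      rw [h0]; exact (LinearMap.trace_eq_matrix_trace ℝ g _).symm
    have h2 : LinearMap.trace ℝ L (T ∘ₗ T) = (LinearMap.toMatrix e e (T ∘ₗ T)).trace :=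
      LinearMap.trace_eq_matrix_trace ℝ e _
    rw [h1, h2]
    simp [Matrix.trace, Matrix.diag, Fin.sum_univ_four, LinearMap.toMatrix_apply,
      LinearMap.comp_apply, hT0, hT1, hT2, hT3, Module.Basis.repr_self]
    norm_num
  -- t ᵥ* Mg = 0
  have htM : tv ᵥ* Mg = 0 := by
    funext i
    have expand : T (g i) = ∑ k : Fin 4, Mg k i • g k := by
      rw [hMgdef]
      conv_lhs => rw [← Module.Basis.sum_repr g (T (g i))]
      refine Finset.sum_congr rfl fun k _ => ?_
      rw [LinearMap.toMatrix_apply]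
    have h := hxiT (g i)
    rw [expand, map_sum] at h
    simp only [_root_.map_smul, smul_eq_mul] at h
    simp only [Matrix.vecMul, dotProduct, Pi.zero_apply, htvdef]
    rw [← h]
    exact Finset.sum_congr rfl fun k _ => mul_comm _ _
  have hA : ∀ i, adMatrix g i = vecMulVec (fun k => Mg k i) tv - tv i • Mg := by
    intro i
    rw [adMatrix, step2 (g i), map_sub, _root_.map_smul]
    congr 1
    · ext k j
      rw [LinearMap.toMatrix_apply]
      simp only [LinearMap.smulRight_apply, _root_.map_smul, smul_eq_mul,
        Matrix.vecMulVec_apply, htvdef, hMgdef, LinearMap.toMatrix_apply,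
        Finsupp.smul_apply]
      ring
  -- assemble
  have hM3' : Mg * Mg * Mg = -Mg := by rw [mul_assoc]; exact hM3
  have hE := ScalarCurvatureAux.core Mg tv hM3' htr2 htM
  have hkey := ScalarCurvatureAux.trace_ricci_eq (fun i => adMatrix g i) Mg tv hA htM htr1 htr2
  have hgoal : (ricciMatrix g).trace
      = -(1/2) * ((tv ⬝ᵥ tv) * (Mgᵀ * Mg).trace - (Mg *ᵥ tv) ⬝ᵥ (Mg *ᵥ tv) - 2 * (tv ⬝ᵥ tv)) := by
    rw [ricciMatrix]
    exact hkey
  rw [hgoal]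
  linarith
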